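/- Soundness for events: let A, B, C be events in a factored space Ω. If the histories h(A|C) and h(B|C) are disjoint, then for every probability distribution P that factorizes over Ω (P = ⊗_{i∈I} P_i), one has P(A ∩ C)·P(B ∩ C) = P(A ∩ B ∩ C)·P(C). -/

import Mathlib

/-- `J` disintegrates `C` if `C = C_J × C_{I∖J}`, i.e. `C` equals the set of `ω`
whose `J`-coordinates agree with some element of `C` and whose `I∖J`-coordinates
agree with some element of `C`. -/
def Disintegrates {I : Type*} {Ω : I → Type*} (J : Set I) (C : Set (∀ i, Ω i)) : Prop :=
  C = {ω | (∃ c ∈ C, ∀ j ∈ J, ω j = c j) ∧ (∃ c ∈ C, ∀ j ∉ J, ω j = c j)}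

/-- `J` generates `X` given `C`: `J` disintegrates `C` and `X` is determined
by the coordinates in `J` on `C`. -/
def Generates {I : Type*} {Ω : I → Type*} {V : Type*} (J : Set I)
    (X : (∀ i, Ω i) → V) (C : Set (∀ i, Ω i)) : Prop :=
  Disintegrates J C ∧ ∀ ω ∈ C, ∀ ω' ∈ C, (∀ j ∈ J, ω j = ω' j) → X ω = X ω'

/-- The history of `X` given `C`: the intersection of all generating sets. -/
def history {I : Type*} {Ω : I → Type*} {V : Type*}
    (X : (∀ i, Ω i) → V) (C : Set (∀ i, Ω i)) : Set I :=
  ⋂₀ {J | Generates J X C}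

/-- The history of an event `A` given `C` is the history of its indicator. -/
def historyE {I : Type*} {Ω : I → Type*} (A C : Set (∀ i, Ω i)) : Set I :=
  history (fun ω => (ω ∈ A)) C

/-- A probability distribution on a finite type. -/
def IsDist {α : Type*} [Fintype α] (P : α → ℝ) : Prop :=
  (∀ a, 0 ≤ P a) ∧ ∑ a, P a = 1

/-- The probability of an event `A` under `P`. -/
noncomputable def pr {α : Type*} [Fintype α] (P : α → ℝ) (A : Set α) : ℝ :=
  ∑ a, A.indicator P a

/-- `P` factorizes over the factored space `∀ i, Ω i`. -/
def Factorizes {I : Type*} [Fintype I] [DecidableEq I] {Ω : I → Type*}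
    [∀ i, Fintype (Ω i)] (P : (∀ i, Ω i) → ℝ) : Prop :=
  ∃ p : ∀ i, Ω i → ℝ, (∀ i, IsDist (p i)) ∧ ∀ ω, P ω = ∏ i, p i (ω i)

section Aux
variable {I : Type*} {Ω : I → Type*} {V : Type*}

theorem generates_univ (X : (∀ i, Ω i) → V) (C : Set (∀ i, Ω i)) :
    Generates Set.univ X C := by
  constructor
  · ext ω
    constructor
    · intro h
      exact ⟨⟨ω, h, fun _ _ => rfl⟩, ⟨ω, h, fun _ _ => rfl⟩⟩
    · rintro ⟨⟨c, hc, hωc⟩, -⟩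
      have : ω = c := funext fun j => hωc j (Set.mem_univ j)
      rwa [this]
  · intro ω _ ω' _ hag
    have : ω = ω' := funext fun j => hag j (Set.mem_univ j)
    rw [this]

theorem generates_inter {J K : Set I} {X : (∀ i, Ω i) → V} {C : Set (∀ i, Ω i)}
    (hJ : Generates J X C) (hK : Generates K X C) : Generates (J ∩ K) X C := by
  classical
  obtain ⟨hJd, hJg⟩ := hJ
  obtain ⟨hKd, hKg⟩ := hK
  constructor
  · ext ω
    constructor
    · intro hω
      exact ⟨⟨ω, hω, fun _ _ => rfl⟩, ⟨ω, hω, fun _ _ => rfl⟩⟩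
    · rintro ⟨⟨c1, hc1, h1⟩, ⟨c2, hc2, h2⟩⟩
      have hxC : (fun i => if i ∈ J then c1 i else c2 i) ∈ C := by
        rw [hJd]
        exact ⟨⟨c1, hc1, fun j hj => by simp [hj]⟩, ⟨c2, hc2, fun j hj => by simp [hj]⟩⟩
      rw [hKd]
      refine ⟨⟨_, hxC, fun j hj => ?_⟩, ⟨c2, hc2, fun j hj => ?_⟩⟩
      · by_cases hjJ : j ∈ J
        · simp only [hjJ, if_true]
          exact h1 j ⟨hjJ, hj⟩
        · simp only [hjJ, if_false]
          exact h2 j (fun h => hjJ h.1)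
      · exact h2 j (fun h => hj h.2)
  · intro ω hω ω' hω' hag
    have htC : (fun i => if i ∈ J then ω i else ω' i) ∈ C := by
      rw [hJd]
      exact ⟨⟨ω, hω, fun j hj => by simp [hj]⟩, ⟨ω', hω', fun j hj => by simp [hj]⟩⟩
    have e1 : X ω = X (fun i => if i ∈ J then ω i else ω' i) :=
      hJg ω hω _ htC (fun j hj => by simp [hj])
    have e2 : X (fun i => if i ∈ J then ω i else ω' i) = X ω' := by
      refine hKg _ htC ω' hω' (fun j hj => ?_)
      by_cases hjJ : j ∈ J
      · simp only [hjJ, if_true]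
        exact hag j ⟨hjJ, hj⟩
      · simp only [hjJ, if_false]
    rw [e1, e2]

theorem generates_history [Fintype I] (X : (∀ i, Ω i) → V) (C : Set (∀ i, Ω i)) :
    Generates (history X C) X C := by
  have key : ∀ S : Set (Set I), S.Finite →
      (∀ J ∈ S, Generates J X C) → Generates (⋂₀ S) X C := by
    intro S hS
    refine Set.Finite.induction_on (motive := fun S _ => (∀ J ∈ S, Generates J X C) → Generates (⋂₀ S) X C) S hS ?_ ?_
    · intro _; rw [Set.sInter_empty]; exact generates_univ X C
    · intro a s _ _ ih hmem
      rw [Set.sInter_insert]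
      exact generates_inter (hmem _ (Set.mem_insert _ _))
        (ih fun J hJ => hmem J (Set.mem_insert_of_mem _ hJ))
  exact key _ (Set.toFinite _) (fun J hJ => hJ)

end Aux

theorem soundness_for_events {I : Type*} [Fintype I] [DecidableEq I]
    {Ω : I → Type*} [∀ i, Fintype (Ω i)] [∀ i, Nonempty (Ω i)]
    (A B C : Set (∀ i, Ω i))
    (h : Disjoint (historyE A C) (historyE B C)) :
    ∀ P : (∀ i, Ω i) → ℝ, Factorizes P →
      pr P (A ∩ C) * pr P (B ∩ C) = pr P (A ∩ B ∩ C) * pr P C := by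
  classical
  intro P hP
  obtain ⟨p, -, hfac⟩ := hP
  set J := historyE A C with hJdef
  set K := historyE B C with hKdef
  have hJ : Generates J (fun ω => (ω ∈ A)) C := generates_history _ C
  have hK : Generates K (fun ω => (ω ∈ B)) C := generates_history _ C
  have hKJ : ∀ j ∈ K, j ∉ J := fun j hj => Set.disjoint_right.mp h hj
  -- the swap maps
  set σ₁ : (∀ i, Ω i) → (∀ i, Ω i) → (∀ i, Ω i) :=
    fun ω ω' i => if i ∈ J then ω i else ω' i with hσ
  -- key membership equivalence
  have key : ∀ ω ω', (ω ∈ A ∩ B ∩ C ∧ ω' ∈ C) ↔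
      (σ₁ ω ω' ∈ A ∩ C ∧ σ₁ ω' ω ∈ B ∩ C) := by
    intro ω ω'
    constructor
    · rintro ⟨⟨⟨hωA, hωB⟩, hωC⟩, hω'C⟩
      have hτC : σ₁ ω ω' ∈ C := by
        rw [hJ.1]
        exact ⟨⟨ω, hωC, fun j hj => by simp [hσ, hj]⟩,
               ⟨ω', hω'C, fun j hj => by simp [hσ, hj]⟩⟩
      have hτ'C : σ₁ ω' ω ∈ C := by
        rw [hJ.1]
        exact ⟨⟨ω', hω'C, fun j hj => by simp [hσ, hj]⟩,
               ⟨ω, hωC, fun j hj => by simp [hσ, hj]⟩⟩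
      have hτA : σ₁ ω ω' ∈ A := by
        have h2 : (ω ∈ A) = (σ₁ ω ω' ∈ A) :=
          hJ.2 ω hωC _ hτC (fun j hj => by simp [hσ, hj])
        exact h2 ▸ hωA
      have hτ'B : σ₁ ω' ω ∈ B := by
        have h2 : (ω ∈ B) = (σ₁ ω' ω ∈ B) :=
          hK.2 ω hωC _ hτ'C (fun j hj => by simp [hσ, hj, hKJ j hj])
        exact h2 ▸ hωB
      exact ⟨⟨hτA, hτC⟩, hτ'B, hτ'C⟩
    · rintro ⟨⟨hτA, hτC⟩, hτ'B, hτ'C⟩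
      have hωC : ω ∈ C := by
        rw [hJ.1]
        exact ⟨⟨σ₁ ω ω', hτC, fun j hj => by simp [hσ, hj]⟩,
               ⟨σ₁ ω' ω, hτ'C, fun j hj => by simp [hσ, hj]⟩⟩
      have hω'C : ω' ∈ C := by
        rw [hJ.1]
        exact ⟨⟨σ₁ ω' ω, hτ'C, fun j hj => by simp [hσ, hj]⟩,
               ⟨σ₁ ω ω', hτC, fun j hj => by simp [hσ, hj]⟩⟩
      have hωA : ω ∈ A := by
        have h2 : (σ₁ ω ω' ∈ A) = (ω ∈ A) :=
          hJ.2 _ hτC ω hωC (fun j hj => by simp [hσ, hj])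
        exact h2 ▸ hτA
      have hωB : ω ∈ B := by
        have h2 : (σ₁ ω' ω ∈ B) = (ω ∈ B) :=
          hK.2 _ hτ'C ω hωC (fun j hj => by simp [hσ, hj, hKJ j hj])
        exact h2 ▸ hτ'B
      exact ⟨⟨⟨hωA, hωB⟩, hωC⟩, hω'C⟩
  -- weight invariance
  have weight : ∀ ω ω', P (σ₁ ω ω') * P (σ₁ ω' ω) = P ω * P ω' := by
    intro ω ω'
    rw [hfac, hfac, hfac, hfac, ← Finset.prod_mul_distrib, ← Finset.prod_mul_distrib]
    refine Finset.prod_congr rfl (fun i _ => ?_)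
    by_cases hi : i ∈ J
    · simp [hσ, hi]
    · simp [hσ, hi, mul_comm]
  -- sums
  have expand : ∀ S T : Set (∀ i, Ω i), pr P S * pr P T =
      ∑ x : (∀ i, Ω i) × (∀ i, Ω i), S.indicator P x.1 * T.indicator P x.2 := by
    intro S T
    rw [Fintype.sum_prod_type]
    show (∑ a, S.indicator P a) * (∑ a, T.indicator P a) = _
    rw [Finset.sum_mul_sum]
  rw [expand, expand]
  have hbij : Function.Bijective
      (fun x : (∀ i, Ω i) × (∀ i, Ω i) => (σ₁ x.1 x.2, σ₁ x.2 x.1)) := by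
    have hinv : ∀ x : (∀ i, Ω i) × (∀ i, Ω i),
        (σ₁ (σ₁ x.1 x.2) (σ₁ x.2 x.1), σ₁ (σ₁ x.2 x.1) (σ₁ x.1 x.2)) = x := by
      rintro ⟨a, b⟩
      refine Prod.ext (funext fun i => ?_) (funext fun i => ?_) <;>
        · by_cases hi : i ∈ J <;> simp [hσ, hi]
    exact Function.Involutive.bijective hinv
  refine (Fintype.sum_bijective _ hbij
    (fun x => (A ∩ B ∩ C).indicator P x.1 * C.indicator P x.2)
    (fun x => (A ∩ C).indicator P x.1 * (B ∩ C).indicator P x.2)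
    (fun x => ?_)).symm
  obtain ⟨ω, ω'⟩ := x
  show (A ∩ B ∩ C).indicator P ω * C.indicator P ω' =
    (A ∩ C).indicator P (σ₁ ω ω') * (B ∩ C).indicator P (σ₁ ω' ω)
  by_cases hc : ω ∈ A ∩ B ∩ C ∧ ω' ∈ C
  · obtain ⟨h1, h2⟩ := (key ω ω').mp hc
    rw [Set.indicator_of_mem hc.1, Set.indicator_of_mem hc.2,
        Set.indicator_of_mem h1, Set.indicator_of_mem h2]
    exact (weight ω ω').symm
  · have hc' := (not_congr (key ω ω')).mp hc
    have z1 : (A ∩ B ∩ C).indicator P ω * C.indicator P ω' = 0 := by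
      rcases not_and_or.mp hc with h' | h' <;>
        simp [Set.indicator_of_notMem h']
    have z2 : (A ∩ C).indicator P (σ₁ ω ω') * (B ∩ C).indicator P (σ₁ ω' ω) = 0 := by
      rcases not_and_or.mp hc' with h' | h' <;>
        simp [Set.indicator_of_notMem h']
    rw [z1, z2]
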